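/- arXiv:1509.00099 — 6 statements merged into one kernel-verified Lean document; each statement's English description precedes it below -/
import Mathlib

section
/- Let (V, w) be a weighted digraph with a symmetric weight function (w u v = w v u for all u, v) such that w u v < 1 for all u, v, and such that every vertex v has at most 3 neighbors, i.e. the set {u | w u v > 0} has at most 3 elements. Then (V, w) admits a valid weighted improper 2-coloring; in particular its weighted improper chromatic number is at most 2. -/
open Finset

/-- A `k`-coloring `c` of a weighted digraph `(V, w)` is a valid weighted improper
coloring if every vertex has weighted indegree less than `1` from same-colored vertices. -/
def ValidWIC {V : Type*} [Fintype V] [DecidableEq V] {k : ℕ} (w : V → V → ℝ)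
    (c : V → Fin k) : Prop :=
  ∀ v : V, ∑ u ∈ Finset.univ.filter (fun u => u ≠ v ∧ c u = c v), w u v < 1

/-!
Give the vertices a colouring, by any finite nonempty set of colours, that minimises the number of
monochromatic edges of the graph `u ~ v ↔ 0 < w u v`. Recolouring a single vertex `v` changes that
number by twice the difference of the numbers of neighbours of `v` in the old and the new colour,
so at a minimum no colour class holds fewer neighbours of `v` than its own. With two colours and at
most three neighbours, `v` thus has at most one neighbour of its own colour, whose weight is `< 1`.
-/

theorem Fintype.sum_sum_add_diag_eq_two_nsmul {V M : Type*} [Fintype V] [DecidableEq V]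
    [AddCommMonoid M] {D : V → V → M} (v₀ : V) (hsymm : ∀ u v, D u v = D v u)
    (hD : ∀ u v, u ≠ v₀ → v ≠ v₀ → D u v = 0) :
    ∑ u, ∑ v, D u v + D v₀ v₀ = 2 • ∑ u, D u v₀ := by
  have hoff : ∑ u, ∑ v ∈ {v₀}ᶜ, D u v = ∑ v ∈ {v₀}ᶜ, D v v₀ := by
    rw [Finset.sum_comm]
    refine Finset.sum_congr rfl fun v hv => ?_
    rw [Fintype.sum_eq_single v₀ fun u hu => hD u v hu (by simpa using hv), hsymm]
  calc ∑ u, ∑ v, D u v + D v₀ v₀ = ∑ u, D u v₀ + (D v₀ v₀ + ∑ v ∈ {v₀}ᶜ, D v v₀) := by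
        simp_rw [Fintype.sum_eq_add_sum_compl v₀ (D _)]
        rw [sum_add_distrib, hoff, add_assoc, add_comm (D v₀ v₀)]
    _ = 2 • ∑ u, D u v₀ := by rw [← Fintype.sum_eq_add_sum_compl v₀ (D · v₀), two_nsmul]

theorem Finset.sum_lt_of_card_le_one {ι : Type*} {s : Finset ι} {f : ι → ℝ} {a : ℝ}
    (hs : #s ≤ 1) (ha : 0 < a) (hf : ∀ i ∈ s, f i < a) : ∑ i ∈ s, f i < a := by
  rcases Nat.le_one_iff_eq_zero_or_eq_one.mp hs with h | h
  · simpa [card_eq_zero.mp h] using ha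
  · obtain ⟨i, rfl⟩ := card_eq_one.mp h
    simpa using hf i (mem_singleton_self i)

namespace SimpleGraph

variable {V α : Type*} [Fintype V] [DecidableEq α]
  (G : SimpleGraph V) [DecidableRel G.Adj]

def colorDegree (c : V → α) (v : V) (x : α) : ℕ := #{u ∈ G.neighborFinset v | c u = x}

def monoAdjCount (c : V → α) : ℤ := ∑ u, ∑ v, if G.Adj u v ∧ c u = c v then 1 else 0

theorem sum_colorDegree [Fintype α] (c : V → α) (v : V) :
    ∑ x, G.colorDegree c v x = G.degree v :=
  (card_eq_sum_card_fiberwise fun _ _ => mem_coe.mpr (mem_univ _)).symm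

theorem sum_adj_color_eq_colorDegree (c : V → α) (v : V) (x : α) :
    ∑ u, (if G.Adj u v ∧ c u = x then 1 else 0 : ℤ) = G.colorDegree c v x := by
  simp [colorDegree, neighborFinset_eq_filter, filter_filter, G.adj_comm v]

theorem monoAdjCount_update_add [DecidableEq V] (c : V → α) (v₀ : V) (x : α) :
    G.monoAdjCount (Function.update c v₀ x) + 2 * G.colorDegree c v₀ (c v₀) =
      G.monoAdjCount c + 2 * G.colorDegree c v₀ x := by
  set c' := Function.update c v₀ x
  let F (c : V → α) (u v : V) : ℤ := if G.Adj u v ∧ c u = c v then 1 else 0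
  have hF : ∀ c u v, F c u v = F c v u := fun c u v => by simp only [F, G.adj_comm u, eq_comm]
  have hcross := Fintype.sum_sum_add_diag_eq_two_nsmul (D := fun u v => F c' u v - F c u v) v₀
    (fun u v => by rw [hF c' u, hF c u])
    (fun u v hu hv => by
      simp only [F, c', Function.update_of_ne hu, Function.update_of_ne hv, sub_self])
  have hcol' : ∑ u, F c' u v₀ = G.colorDegree c v₀ x := by
    rw [← sum_adj_color_eq_colorDegree]
    refine Fintype.sum_congr _ _ fun u => ?_
    by_cases hu : G.Adj u v₀
    · simp [F, c', hu, Function.update_of_ne hu.ne]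
    · simp [F, hu]
  have hcol : ∑ u, F c u v₀ = G.colorDegree c v₀ (c v₀) := sum_adj_color_eq_colorDegree G c v₀ _
  simp only [sum_sub_distrib, hcol, hcol', F, G.irrefl, false_and, if_false, sub_self, add_zero,
    nsmul_eq_mul, Nat.cast_ofNat] at hcross
  simp only [monoAdjCount]
  linarith

theorem colorDegree_self_le_of_forall_le {c : V → α}
    (hc : ∀ c' : V → α, G.monoAdjCount c ≤ G.monoAdjCount c') (v : V) (x : α) :
    G.colorDegree c v (c v) ≤ G.colorDegree c v x := by
  classical
  have hflip := G.monoAdjCount_update_add c v x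
  have hmin := hc (Function.update c v x)
  omega

theorem exists_coloring_card_mul_colorDegree_self_le_degree [Fintype α] [Nonempty α] :
    ∃ c : V → α, ∀ v, Fintype.card α * G.colorDegree c v (c v) ≤ G.degree v := by
  obtain ⟨c, hc⟩ := Finite.exists_min (G.monoAdjCount (α := α))
  refine ⟨c, fun v => ?_⟩
  calc Fintype.card α * G.colorDegree c v (c v) = ∑ _x : α, G.colorDegree c v (c v) := by simp
    _ ≤ ∑ x, G.colorDegree c v x := sum_le_sum fun x _ => G.colorDegree_self_le_of_forall_le hc v x
    _ = G.degree v := G.sum_colorDegree c v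

end SimpleGraph

theorem validWIC_of_card_pos_le_one {V : Type*} [Fintype V] [DecidableEq V] {k : ℕ}
    {w : V → V → ℝ} (hw0 : ∀ u v, 0 ≤ w u v) (hlt : ∀ u v, w u v < 1) {c : V → Fin k}
    (hc : ∀ v, #{u | (u ≠ v ∧ c u = c v) ∧ 0 < w u v} ≤ 1) : ValidWIC w c := by
  intro v
  rw [← sum_filter_of_ne (p := fun u => 0 < w u v) fun u _ hu => (hw0 u v).lt_of_ne' hu,
    filter_filter]
  exact sum_lt_of_card_le_one (hc v) one_pos fun u _ => hlt u v

theorem subcubic_weights_lt_one_two_colorable_general {V : Type*} [Fintype V] [DecidableEq V]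
    (w : V → V → ℝ)
    (hw0 : ∀ u v, 0 ≤ w u v)
    (hsym : ∀ u v, w u v = w v u)
    (hlt : ∀ u v, w u v < 1)
    (hdeg : ∀ v : V, (Finset.univ.filter (fun u => 0 < w u v)).card ≤ 3) :
    ∃ c : V → Fin 2, ValidWIC w c := by
  classical
  let G := SimpleGraph.fromRel fun u v => 0 < w u v
  have hadj : ∀ u v, G.Adj v u ↔ u ≠ v ∧ 0 < w u v := fun u v => by
    simp [G, hsym v u, ne_comm]
  have hdegG : ∀ v, G.degree v ≤ 3 := fun v =>
    (card_le_card fun u => by simp [hadj]).trans (hdeg v)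
  obtain ⟨c, hc⟩ := G.exists_coloring_card_mul_colorDegree_self_le_degree (α := Fin 2)
  refine ⟨c, validWIC_of_card_pos_le_one hw0 hlt fun v => ?_⟩
  have hsame : #{u | (u ≠ v ∧ c u = c v) ∧ 0 < w u v} = G.colorDegree c v (c v) := by
    simp only [SimpleGraph.colorDegree, SimpleGraph.neighborFinset_eq_filter, filter_filter, hadj]
    congr 1; ext u; simp only [mem_filter, mem_univ, true_and]; tauto
  have htwice : 2 * G.colorDegree c v (c v) ≤ 3 := by simpa using (hc v).trans (hdegG v)
  omega

theorem subcubic_weights_lt_one_two_colorable {V : Type*} [Fintype V] [DecidableEq V]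
    (w : V → V → ℝ)
    (hw0 : ∀ u v, 0 ≤ w u v) (hwd : ∀ v, w v v = 0)
    (hsym : ∀ u v, w u v = w v u)
    (hlt : ∀ u v, w u v < 1)
    (hdeg : ∀ v : V, (Finset.univ.filter (fun u => 0 < w u v)).card ≤ 3) :
    ∃ c : V → Fin 2, ValidWIC w c :=
  subcubic_weights_lt_one_two_colorable_general w hw0 hsym hlt hdeg
end

section
/- Let (V, w) be a weighted digraph with a symmetric weight function (w u v = w v u for all u, v), let G be the underlying simple graph on V with u adjacent to v iff u ≠ v and w u v > 0, and let w_min : ℝ satisfy w_min > 0 and w_min ≤ w u v whenever w u v > 0. Let d : ℕ satisfy (d+1)·w_min ≥ 1. If c : V → Fin k is a valid weighted improper coloring of (V, w), then the chromatic number of G is at most (d+1)·k. In particular, the chromatic number of G is at most (d+1) times the weighted improper chromatic number of (V, w). -/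
/-!
Every vertex has fewer than `d + 1` neighbours of its own colour, since each such neighbour
contributes at least `wmin` to a weighted indegree below `1 ≤ (d + 1) * wmin`. Hence the
monochromatic part of `G` has maximum degree at most `d` and is greedily `(d + 1)`-colourable;
pairing that colouring with `c` properly colours `G` with `k * (d + 1)` colours.
-/

open Finset

namespace SimpleGraph

variable {V : Type*} {G : SimpleGraph V}

def monochromatic (G : SimpleGraph V) {α : Type*} (c : V → α) : SimpleGraph V where
  Adj u v := G.Adj u v ∧ c u = c v
  symm := ⟨fun _ _ h => ⟨h.1.symm, h.2.symm⟩⟩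
  loopless := ⟨fun _ h => G.irrefl h.1⟩

@[simp]
theorem monochromatic_adj {α : Type*} {c : V → α} {u v : V} :
    (G.monochromatic c).Adj u v ↔ G.Adj u v ∧ c u = c v :=
  Iff.rfl

instance {α : Type*} [DecidableRel G.Adj] [DecidableEq α] (c : V → α) :
    DecidableRel (G.monochromatic c).Adj :=
  fun _ _ => decidable_of_iff _ monochromatic_adj.symm

theorem Colorable.of_monochromatic {α : Type*} [Fintype α] {m : ℕ} (c : V → α)
    (h : (G.monochromatic c).Colorable m) : G.Colorable (Fintype.card α * m) := by
  obtain ⟨C⟩ := h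
  have D : G.Coloring (α × Fin m) :=
    Coloring.mk (fun v => (c v, C v)) fun {u v} huv heq =>
      C.valid ⟨huv, congrArg Prod.fst heq⟩ (congrArg Prod.snd heq)
  simpa using D.colorable

section Greedy

variable [Fintype V] [DecidableRel G.Adj] {d : ℕ}

theorem exists_color_notMem_neighbors {v : V} (hv : G.degree v ≤ d) (f : V → Fin (d + 1)) :
    ∃ x, ∀ u, G.Adj v u → f u ≠ x := by
  have hcard : #((G.neighborFinset v).image f) < #(univ : Finset (Fin (d + 1))) := by
    simpa using card_image_le.trans_lt (Nat.lt_succ_of_le hv)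
  obtain ⟨x, -, hx⟩ := exists_mem_notMem_of_card_lt_card hcard
  exact ⟨x, fun u hu hux => hx (mem_image.2 ⟨u, (G.mem_neighborFinset v u).2 hu, hux⟩)⟩

theorem exists_coloring_on_of_degree_le [DecidableEq V] (h : ∀ v, G.degree v ≤ d)
    (s : Finset V) : ∃ f : V → Fin (d + 1), ∀ u ∈ s, ∀ v ∈ s, G.Adj u v → f u ≠ f v := by
  induction s using Finset.induction_on with
  | empty => exact ⟨fun _ => 0, by simp⟩
  | @insert a s ha ih =>
    obtain ⟨f, hf⟩ := ih
    obtain ⟨x, hx⟩ := exists_color_notMem_neighbors (h a) f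
    refine ⟨Function.update f a x, ?_⟩
    simp only [mem_insert]
    rintro u (rfl | hu) v (rfl | hv) huv
    · exact absurd huv G.irrefl
    · rw [Function.update_self, Function.update_of_ne (ne_of_mem_of_not_mem hv ha)]
      exact (hx v huv).symm
    · rw [Function.update_self, Function.update_of_ne (ne_of_mem_of_not_mem hu ha)]
      exact hx u huv.symm
    · rw [Function.update_of_ne (ne_of_mem_of_not_mem hu ha),
        Function.update_of_ne (ne_of_mem_of_not_mem hv ha)]
      exact hf u hu v hv huv

theorem colorable_succ_of_degree_le (h : ∀ v, G.degree v ≤ d) : G.Colorable (d + 1) := by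
  classical
  obtain ⟨f, hf⟩ := exists_coloring_on_of_degree_le h univ
  exact ⟨Coloring.mk f fun huv => hf _ (mem_univ _) _ (mem_univ _) huv⟩

end Greedy

end SimpleGraph

theorem Finset.card_le_of_sum_lt_one {ι : Type*} {s : Finset ι} {f : ι → ℝ} {m : ℝ} {d : ℕ}
    (hm : ∀ i ∈ s, m ≤ f i) (hs : ∑ i ∈ s, f i < 1) (hd : 1 ≤ (d + 1 : ℝ) * m) :
    #s ≤ d := by
  have hsum : #s * m ≤ ∑ i ∈ s, f i := by simpa using card_nsmul_le_sum s f m hm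
  have hm0 : 0 ≤ m := (pos_of_mul_pos_right (one_pos.trans_le hd) (by positivity)).le
  have hcard : (#s : ℝ) < d + 1 := lt_of_mul_lt_mul_right (by linarith) hm0
  exact Nat.lt_succ_iff.1 (by exact_mod_cast hcard)

theorem ValidWIC.degree_monochromatic_le {V : Type*} [Fintype V] [DecidableEq V] {k : ℕ}
    {w : V → V → ℝ} {c : V → Fin k} (hc : ValidWIC w c) (hw0 : ∀ u v, 0 ≤ w u v)
    {G : SimpleGraph V} [DecidableRel G.Adj] (hG : ∀ u v, G.Adj u v → 0 < w u v)
    {wmin : ℝ} (hmin : ∀ u v, 0 < w u v → wmin ≤ w u v) {d : ℕ}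
    (hd : 1 ≤ (d + 1 : ℝ) * wmin) (v : V) : (G.monochromatic c).degree v ≤ d := by
  have hsub : (G.monochromatic c).neighborFinset v ⊆ univ.filter (fun u => u ≠ v ∧ c u = c v) :=
    fun u hu => by
      obtain ⟨hvu, hcu⟩ := ((G.monochromatic c).mem_neighborFinset v u).1 hu
      simpa using ⟨hvu.ne', hcu.symm⟩
  have hsum : ∑ u ∈ (G.monochromatic c).neighborFinset v, w u v < 1 :=
    (sum_le_sum_of_subset_of_nonneg hsub fun u _ _ => hw0 u v).trans_lt (hc v)
  refine card_le_of_sum_lt_one (fun u hu => hmin u v (hG u v ?_)) hsum hd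
  exact (((G.monochromatic c).mem_neighborFinset v u).1 hu).1.symm

theorem chromatic_le_of_weighted_improper_general {V : Type*} [Fintype V] [DecidableEq V]
    (w : V → V → ℝ)
    (hw0 : ∀ u v, 0 ≤ w u v)
    (G : SimpleGraph V) (hG : ∀ u v, G.Adj u v ↔ u ≠ v ∧ 0 < w u v)
    (wmin : ℝ) (hmin : ∀ u v, 0 < w u v → wmin ≤ w u v)
    (d : ℕ) (hd : 1 ≤ (d + 1 : ℝ) * wmin)
    (k : ℕ) (c : V → Fin k) (hc : ValidWIC w c) :
    G.chromaticNumber ≤ ((d + 1) * k : ℕ) := by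
  classical
  have hmono : (G.monochromatic c).Colorable (d + 1) :=
    SimpleGraph.colorable_succ_of_degree_le
      (hc.degree_monochromatic_le hw0 (fun u v huv => ((hG u v).1 huv).2) hmin hd)
  simpa [Nat.mul_comm] using (hmono.of_monochromatic c).chromaticNumber_le

theorem chromatic_le_of_weighted_improper {V : Type*} [Fintype V] [DecidableEq V]
    (w : V → V → ℝ)
    (hw0 : ∀ u v, 0 ≤ w u v) (hwd : ∀ v, w v v = 0)
    (hsym : ∀ u v, w u v = w v u)
    (G : SimpleGraph V) (hG : ∀ u v, G.Adj u v ↔ u ≠ v ∧ 0 < w u v)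
    (wmin : ℝ) (hmin0 : 0 < wmin) (hmin : ∀ u v, 0 < w u v → wmin ≤ w u v)
    (d : ℕ) (hd : 1 ≤ (d + 1 : ℝ) * wmin)
    (k : ℕ) (c : V → Fin k) (hc : ValidWIC w c) :
    G.chromaticNumber ≤ ((d + 1) * k : ℕ) :=
  chromatic_le_of_weighted_improper_general w hw0 G hG wmin hmin d hd k c hc
end

section
/- Let G be a finite simple graph in which every vertex has degree at most Δ, and let d be a natural number. Then G admits a d-defective coloring with ⌈Δ/(d+1)⌉ + 1 colors, i.e. there exists a coloring c : V → Fin (⌈Δ/(d+1)⌉ + 1) such that every vertex v has at most d neighbors u with c u = c v. -/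
/-!
Take a colouring minimising the number of monochromatic edges. Recolouring a single vertex `v`
with colour `j` changes that number by `#{u ∈ N(v) | c u = j} - #{u ∈ N(v) | c u = c v}`, so
at a minimum every vertex has no more neighbours of its own colour than of any other colour. With
`⌈Δ/(d+1)⌉ + 1` colours and at most `Δ` neighbours, pigeonhole gives a colour used at most `d`
times around `v`.
-/

open Finset

namespace SimpleGraph

variable {V α : Type*} [Fintype V] (G : SimpleGraph V) [DecidableRel G.Adj] [DecidableEq α]

lemma exists_card_neighborFinset_filter_eq_le [Fintype α] (c : V → α) {v : V} {d : ℕ}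
    (hv : G.degree v < Fintype.card α * (d + 1)) :
    ∃ j, #{u ∈ G.neighborFinset v | c u = j} ≤ d := by
  obtain ⟨j, -, hj⟩ := exists_card_fiber_lt_of_card_lt_mul (s := G.neighborFinset v) (f := c)
    (t := univ) (by rwa [card_neighborFinset_eq_degree, card_univ])
  exact ⟨j, Nat.lt_succ_iff.1 hj⟩

variable [DecidableEq V]

/-- Each monochromatic edge is counted twice, once per orientation. -/
def monochromaticPairs (c : V → α) : Finset (V × V) :=
  {p | G.Adj p.1 p.2 ∧ c p.1 = c p.2}

lemma card_monochromaticPairs_incident (c : V → α) (v : V) :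
    #{p ∈ G.monochromaticPairs c | p.1 = v ∨ p.2 = v} =
      2 * #{u ∈ G.neighborFinset v | c u = c v} := by
  have hfst :
      #{p ∈ G.monochromaticPairs c | p.1 = v} = #{u ∈ G.neighborFinset v | c u = c v} := by
    refine card_nbij' Prod.snd (fun u => (v, u)) ?_ ?_ ?_ ?_ <;>
      intro p <;> simp +contextual [monochromaticPairs, eq_comm]
  have hsnd :
      #{p ∈ G.monochromaticPairs c | p.2 = v} = #{u ∈ G.neighborFinset v | c u = c v} := by
    refine card_nbij' Prod.fst (fun u => (u, v)) ?_ ?_ ?_ ?_ <;>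
      intro p <;> simp +contextual [monochromaticPairs, Prod.ext_iff] <;> grind [adj_comm]
  have hdisj : Disjoint {p ∈ G.monochromaticPairs c | p.1 = v}
      {p ∈ G.monochromaticPairs c | p.2 = v} := by
    refine disjoint_filter.2 fun p hp h1 h2 => ?_
    simp only [monochromaticPairs, mem_filter, mem_univ, true_and] at hp
    exact G.loopless.irrefl v (by rw [h1, h2] at hp; exact hp.1)
  rw [filter_or, card_union_of_disjoint hdisj, hfst, hsnd, two_mul]

lemma filter_monochromaticPairs_not_incident_congr {c c' : V → α} {v : V}
    (h : ∀ w, w ≠ v → c w = c' w) :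
    {p ∈ G.monochromaticPairs c | ¬(p.1 = v ∨ p.2 = v)} =
      {p ∈ G.monochromaticPairs c' | ¬(p.1 = v ∨ p.2 = v)} := by
  ext ⟨a, b⟩
  simp only [monochromaticPairs, mem_filter, mem_univ, true_and, not_or]
  constructor <;> rintro ⟨⟨hab, hc⟩, ha, hb⟩ <;> refine ⟨⟨hab, ?_⟩, ha, hb⟩
  · rwa [← h a ha, ← h b hb]
  · rwa [h a ha, h b hb]

lemma card_monochromaticPairs_update (c : V → α) (v : V) (j : α) :
    #(G.monochromaticPairs (Function.update c v j)) + 2 * #{u ∈ G.neighborFinset v | c u = c v} =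
      #(G.monochromaticPairs c) + 2 * #{u ∈ G.neighborFinset v | c u = j} := by
  have hnbr : {u ∈ G.neighborFinset v | Function.update c v j u = Function.update c v j v} =
      {u ∈ G.neighborFinset v | c u = j} := by
    refine filter_congr fun u hu => ?_
    rw [Function.update_of_ne (G.ne_of_adj ((G.mem_neighborFinset v u).1 hu)).symm,
      Function.update_self]
  rw [← card_filter_add_card_filter_not (p := fun p : V × V => p.1 = v ∨ p.2 = v),
    ← card_filter_add_card_filter_not (s := G.monochromaticPairs c)
      (p := fun p : V × V => p.1 = v ∨ p.2 = v),
    card_monochromaticPairs_incident, card_monochromaticPairs_incident, hnbr,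
    G.filter_monochromaticPairs_not_incident_congr (c := c)
      fun w hw => (Function.update_of_ne hw j c).symm]
  ring

lemma card_neighborFinset_filter_eq_le_of_forall_le {c : V → α}
    (hmin : ∀ c' : V → α, #(G.monochromaticPairs c) ≤ #(G.monochromaticPairs c'))
    (v : V) (j : α) :
    #{u ∈ G.neighborFinset v | c u = c v} ≤ #{u ∈ G.neighborFinset v | c u = j} := by
  have := G.card_monochromaticPairs_update c v j
  have := hmin (Function.update c v j)
  omega

end SimpleGraph

open SimpleGraph

theorem defective_coloring_of_max_degree {V : Type*} [Fintype V] [DecidableEq V]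
    (G : SimpleGraph V) [DecidableRel G.Adj]
    (Δ d : ℕ) (hdeg : ∀ v : V, G.degree v ≤ Δ) :
    ∃ c : V → Fin ((Δ + d) / (d + 1) + 1),
      ∀ v : V, ((G.neighborFinset v).filter (fun u => c u = c v)).card ≤ d := by
  obtain ⟨c, -, hmin⟩ := exists_min_image univ (fun c => #(G.monochromaticPairs c))
    (univ_nonempty (α := V → Fin ((Δ + d) / (d + 1) + 1)))
  refine ⟨c, fun v => ?_⟩
  have hcolors : G.degree v < Fintype.card (Fin ((Δ + d) / (d + 1) + 1)) * (d + 1) := by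
    rw [Fintype.card_fin, mul_comm]
    exact (hdeg v).trans_lt <| (Nat.le_add_right Δ d).trans_lt <|
      Nat.lt_mul_div_succ (Δ + d) d.succ_pos
  obtain ⟨j, hj⟩ := G.exists_card_neighborFinset_filter_eq_le c hcolors
  have hlocal := G.card_neighborFinset_filter_eq_le_of_forall_le (fun c' => hmin c' (mem_univ c'))
  exact (hlocal v j).trans hj
end

section
/- Let (V, w) be a weighted digraph and let W = ∑_{u, v} w u v be the sum of all edge weights. Then (V, w) admits a valid weighted improper coloring with 2·⌊√(2W)⌋ + 1 colors, where ⌊√(2W)⌋ is the natural-number floor of the real square root of 2W; in particular the weighted improper chromatic number of (V, w) is at most 2·⌊√(2W)⌋ + 1. -/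
/-!
Let `t = ⌊√(2W)⌋` and let `d v` be the total weight of the arcs at `v`, in both directions.
Since `∑ v, d v = 2W < (t + 1)²`, at most `t` vertices are heavy (`d v ≥ t + 1`), and each of
them gets a private color. The light vertices share `t + 1` further colors, chosen to minimize
the monochromatic weight among light vertices: at such a minimum no light vertex `v` gains by
changing its color, so the weight between `v` and its own color class is at most the average
over the `t + 1` classes, `d v / (t + 1) < 1`.
-/

open Finset

theorem validWIC_comp {V β : Type*} [Fintype V] [DecidableEq V] [DecidableEq β] {k : ℕ}
    (w : V → V → ℝ) (c : V → β) {f : β → Fin k} (hf : Function.Injective f)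
    (h : ∀ v, ∑ u with u ≠ v ∧ c u = c v, w u v < 1) : ValidWIC w (f ∘ c) := by
  simpa only [ValidWIC, Function.comp_apply, hf.eq_iff] using h

section

variable {V α : Type*} [Fintype V]

def weightedDegree (w : V → V → ℝ) (v : V) : ℝ :=
  ∑ u, (w u v + w v u)

theorem sum_weightedDegree (w : V → V → ℝ) :
    ∑ v, weightedDegree w v = 2 * ∑ u, ∑ v, w u v := by
  simp only [weightedDegree, sum_add_distrib]
  rw [sum_comm]
  ring

theorem card_mul_le_of_le_weightedDegree [DecidableEq V] (w : V → V → ℝ)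
    (hw : ∀ u v, 0 ≤ w u v) (a : ℝ) :
    #{v | a ≤ weightedDegree w v} * a ≤ 2 * ∑ u, ∑ v, w u v := by
  rw [← sum_weightedDegree, ← nsmul_eq_mul]
  exact (card_nsmul_le_sum _ _ a fun v hv => (mem_filter.1 hv).2).trans <|
    sum_le_sum_of_subset_of_nonneg (subset_univ _) fun v _ _ =>
      sum_nonneg fun u _ => add_nonneg (hw u v) (hw v u)

variable [DecidableEq V]

theorem Finset.sum_sum_eq_sum_erase_sum_erase_add {M : Type*} [AddCommGroup M]
    (f : V → V → M) (v : V) :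
    ∑ u, ∑ u', f u u' = ∑ u ∈ univ.erase v, ∑ u' ∈ univ.erase v, f u u' +
      (∑ u, f u v + ∑ u', f v u') - f v v := by
  have hrow (u : V) : ∑ u', f u u' = ∑ u' ∈ univ.erase v, f u u' + f u v :=
    (sum_erase_add _ _ (mem_univ v)).symm
  simp only [hrow, sum_add_distrib, ← sum_erase_add univ _ (mem_univ v)]
  abel

variable [DecidableEq α]

def monochromaticWeight (w : V → V → ℝ) (c : V → α) : ℝ :=
  ∑ u, ∑ u', if u ≠ u' ∧ c u = c u' then w u u' else 0

def conflictWeight (w : V → V → ℝ) (c : V → α) (v : V) (i : α) : ℝ :=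
  ∑ u ∈ univ.erase v with c u = i, (w u v + w v u)

theorem monochromaticWeight_eq_sum_erase_sum_erase_add_conflictWeight
    (w : V → V → ℝ) (c : V → α) (v : V) :
    monochromaticWeight w c = ∑ u ∈ univ.erase v, ∑ u' ∈ univ.erase v,
      (if u ≠ u' ∧ c u = c u' then w u u' else 0) + conflictWeight w c v (c v) := by
  rw [monochromaticWeight, sum_sum_eq_sum_erase_sum_erase_add _ v, conflictWeight, sum_filter,
    ← sum_erase_add univ _ (mem_univ v),
    ← sum_erase_add univ (fun u' => ite _ (w v u') 0) (mem_univ v)]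
  simp only [ne_eq, not_true_eq_false, false_and, if_false, add_zero, sub_zero]
  rw [← sum_add_distrib]
  congr 1
  refine sum_congr rfl fun u hu => ?_
  have huv : u ≠ v := ne_of_mem_erase hu
  simp only [huv, Ne.symm huv, not_false_eq_true, true_and, eq_comm (a := c v)]
  split_ifs <;> simp

theorem conflictWeight_update_self (w : V → V → ℝ) (c : V → α) (v : V) (i : α) :
    conflictWeight w (Function.update c v i) v i = conflictWeight w c v i :=
  sum_congr (filter_congr fun u hu => by rw [Function.update_of_ne (ne_of_mem_erase hu)])
    fun _ _ => rfl

theorem monochromaticWeight_update (w : V → V → ℝ) (c : V → α) (v : V) (i : α) :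
    monochromaticWeight w (Function.update c v i) =
      monochromaticWeight w c - conflictWeight w c v (c v) + conflictWeight w c v i := by
  rw [monochromaticWeight_eq_sum_erase_sum_erase_add_conflictWeight _ _ v,
    monochromaticWeight_eq_sum_erase_sum_erase_add_conflictWeight w c v,
    Function.update_self, conflictWeight_update_self]
  have hoff : ∀ u ∈ univ.erase v, Function.update c v i u = c u :=
    fun u hu => Function.update_of_ne (ne_of_mem_erase hu) _ _
  rw [sum_congr rfl fun u hu => sum_congr rfl fun u' hu' => by rw [hoff u hu, hoff u' hu']]
  ring

theorem sum_conflictWeight [Fintype α] (w : V → V → ℝ) (c : V → α) (v : V) :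
    ∑ i, conflictWeight w c v i = ∑ u ∈ univ.erase v, (w u v + w v u) :=
  sum_fiberwise _ _ _

theorem exists_coloring_card_mul_conflictWeight_le [Fintype α] [Nonempty α]
    (w : V → V → ℝ) :
    ∃ c : V → α, ∀ v, Fintype.card α * conflictWeight w c v (c v) ≤
      ∑ u ∈ univ.erase v, (w u v + w v u) := by
  obtain ⟨c, -, hc⟩ :=
    exists_min_image (univ : Finset (V → α)) (monochromaticWeight w) univ_nonempty
  refine ⟨c, fun v => ?_⟩
  have hmin (i : α) : conflictWeight w c v (c v) ≤ conflictWeight w c v i := by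
    have := hc (Function.update c v i) (mem_univ _)
    rw [monochromaticWeight_update] at this
    linarith
  calc (Fintype.card α : ℝ) * conflictWeight w c v (c v)
      = ∑ _i : α, conflictWeight w c v (c v) := by simp
    _ ≤ ∑ i, conflictWeight w c v i := sum_le_sum fun i _ => hmin i
    _ = _ := sum_conflictWeight w c v

theorem exists_coloring_card_mul_sum_le_weightedDegree [Fintype α] [Nonempty α]
    (w : V → V → ℝ) (hw : ∀ u v, 0 ≤ w u v) (L : Finset V) :
    ∃ c : V → α, ∀ v ∈ L,
      Fintype.card α * ∑ u ∈ L.erase v with c u = c v, w u v ≤ weightedDegree w v := by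
  set wL : V → V → ℝ := fun u v => if u ∈ L ∧ v ∈ L then w u v else 0
  have hwL : ∀ u v, 0 ≤ wL u v := fun u v => ite_nonneg (hw u v) le_rfl
  have hwL_le : ∀ u v, wL u v ≤ w u v := fun u v => by
    by_cases h : u ∈ L ∧ v ∈ L <;> simp [wL, h, hw u v]
  obtain ⟨c, hc⟩ := exists_coloring_card_mul_conflictWeight_le (α := α) wL
  refine ⟨c, fun v hv => le_trans ?_ ((hc v).trans ?_)⟩
  · gcongr
    calc ∑ u ∈ L.erase v with c u = c v, w u v
        = ∑ u ∈ L.erase v with c u = c v, wL u v :=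
          sum_congr rfl fun u hu => by
            simp [wL, (mem_erase.1 (mem_filter.1 hu).1).2, hv]
      _ ≤ ∑ u ∈ univ.erase v with c u = c v, wL u v :=
          sum_le_sum_of_subset_of_nonneg
            (filter_subset_filter _ (erase_subset_erase _ (subset_univ L)))
            fun u _ _ => hwL u v
      _ ≤ conflictWeight wL c v (c v) :=
          sum_le_sum fun u _ => le_add_of_nonneg_right (hwL v u)
  · exact (sum_le_sum_of_subset_of_nonneg (erase_subset v univ) fun u _ _ =>
        add_nonneg (hwL u v) (hwL v u)).trans
      (sum_le_sum fun u _ => add_le_add (hwL_le u v) (hwL_le v u))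

noncomputable def recolorDistinctOn {β : Type*} (H : Finset V) (c : V → β) (v : V) :
    Fin #H ⊕ β :=
  if h : v ∈ H then .inl (H.equivFin ⟨v, h⟩) else .inr (c v)

variable {β : Type*} [DecidableEq β] {H : Finset V} {v : V}

theorem filter_recolorDistinctOn_eq_empty (c : V → β) (hv : v ∈ H) :
    ({u | u ≠ v ∧ recolorDistinctOn H c u = recolorDistinctOn H c v} : Finset V) = ∅ := by
  refine filter_eq_empty_iff.2 fun u _ ⟨huv, hcu⟩ => huv ?_
  by_cases hu : u ∈ H
  · simpa [recolorDistinctOn, hu, hv] using hcu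
  · simp [recolorDistinctOn, hu, hv] at hcu

theorem filter_recolorDistinctOn_eq (c : V → β) (hv : v ∉ H) :
    ({u | u ≠ v ∧ recolorDistinctOn H c u = recolorDistinctOn H c v} : Finset V) =
      {u ∈ Hᶜ.erase v | c u = c v} := by
  ext u
  by_cases hu : u ∈ H <;> simp [recolorDistinctOn, hu, hv]

end

theorem weighted_improper_coloring_of_total_weight_general {V : Type*} [Fintype V] [DecidableEq V]
    (w : V → V → ℝ)
    (hw0 : ∀ u v, 0 ≤ w u v)
    (W : ℝ) (hW : W = ∑ u : V, ∑ v : V, w u v) :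
    ∃ c : V → Fin (2 * ⌊Real.sqrt (2 * W)⌋₊ + 1), ValidWIC w c := by
  set t := ⌊Real.sqrt (2 * W)⌋₊
  have htW : 2 * W < (t + 1) ^ 2 := (Real.sqrt_lt' (by positivity)).1 (Nat.lt_floor_add_one _)
  set H : Finset V := {v | t + 1 ≤ weightedDegree w v}
  have hH : #H ≤ t := by
    have hHW : #H * (t + 1 : ℝ) ≤ 2 * W := hW ▸ card_mul_le_of_le_weightedDegree w hw0 _
    have : (#H : ℝ) < t + 1 := by nlinarith
    exact Nat.lt_succ_iff.1 (by exact_mod_cast this)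
  obtain ⟨c, hc⟩ :=
    exists_coloring_card_mul_sum_le_weightedDegree (α := Fin (t + 1)) w hw0 Hᶜ
  refine ⟨_, validWIC_comp w (recolorDistinctOn H c)
    ((Fin.castLE_injective (by omega)).comp finSumFinEquiv.injective) fun v => ?_⟩
  by_cases hv : v ∈ H
  · simp [filter_recolorDistinctOn_eq_empty c hv]
  · have hlight : weightedDegree w v < t + 1 := by simpa [H] using hv
    have hcv := hc v (mem_compl.2 hv)
    rw [Fintype.card_fin, Nat.cast_add_one] at hcv
    rw [filter_recolorDistinctOn_eq c hv]
    nlinarith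

theorem weighted_improper_coloring_of_total_weight {V : Type*} [Fintype V] [DecidableEq V]
    (w : V → V → ℝ)
    (hw0 : ∀ u v, 0 ≤ w u v) (hwd : ∀ v, w v v = 0)
    (W : ℝ) (hW : W = ∑ u : V, ∑ v : V, w u v) :
    ∃ c : V → Fin (2 * ⌊Real.sqrt (2 * W)⌋₊ + 1), ValidWIC w c :=
  weighted_improper_coloring_of_total_weight_general w hw0 W hW
end

section
/- Let V be a finite vertex type with an arc relation A : V → V → Prop, let ι be a finite index type, let T be a simple graph on ι that is a tree (connected and acyclic), and let X : ι → Set V be bags forming a tree decomposition, i.e.: (1) every vertex v ∈ V lies in some bag X i; (2) for every arc A u v there is a bag X i containing both u and v; (3) for every vertex v, the subgraph of T induced on {i | v ∈ X i} is connected. For each i define V_i = X i ∪ {u | ∃ x ∈ X i, A u x} (the vertices of X i together with all their in-neighbors). Then for every vertex v ∈ V, the subgraph of T induced on {i | v ∈ V_i} is connected. -/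
/-!
The bags `V_i` containing `v` are those containing `v` itself or one of its out-neighbours `x`.
Each such `{i | x ∈ X i}` is connected and meets `{i | v ∈ X i}` at a bag holding the arc `(v, x)`,
so the union of these sets is connected.
-/

namespace SimpleGraph

variable {V κ : Type*} {G : SimpleGraph V}

lemma induce_union_iUnion_connected {s : Set V} {t : κ → Set V}
    (hs : (G.induce s).Connected) (ht : ∀ k, (G.induce (t k)).Preconnected)
    (hst : ∀ k, (s ∩ t k).Nonempty) :
    (G.induce (s ∪ ⋃ k, t k)).Connected := by
  obtain ⟨⟨u, hu⟩⟩ := hs.nonempty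
  refine G.induce_connected_of_patches u (Or.inl hu) fun {w} hw => ?_
  rcases hw with hw | hw
  · exact ⟨s, Set.subset_union_left, hu, hw, hs.preconnected _ _⟩
  · obtain ⟨k, hk⟩ := Set.mem_iUnion.1 hw
    exact ⟨s ∪ t k, Set.union_subset_union_right _ (Set.subset_iUnion t k), Or.inl hu, Or.inr hk,
      (induce_union_connected hs.preconnected (ht k) (hst k)).preconnected _ _⟩

end SimpleGraph

theorem induced_subtree_of_bags_with_inneighbors_general
    {V : Type*} (A : V → V → Prop)
    {ι : Type*} (T : SimpleGraph ι)
    (X : ι → Set V)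
    (hedge : ∀ u v : V, A u v → ∃ i, u ∈ X i ∧ v ∈ X i)
    (hconn : ∀ v : V, (T.induce {i | v ∈ X i}).Connected) :
    ∀ v : V, (T.induce {i | v ∈ X i ∪ {u | ∃ x ∈ X i, A u x}}).Connected := by
  intro v
  have hbags : {i | v ∈ X i ∪ {u | ∃ x ∈ X i, A u x}} =
      {i | v ∈ X i} ∪ ⋃ x : {x // A v x}, {i | x.1 ∈ X i} := by
    ext i
    simp [and_comm]
  rw [hbags]
  exact T.induce_union_iUnion_connected (hconn v) (fun x => (hconn x).preconnected)
    fun x => hedge v x x.2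

theorem induced_subtree_of_bags_with_inneighbors
    {V : Type*} [Fintype V] (A : V → V → Prop)
    {ι : Type*} [Fintype ι] (T : SimpleGraph ι) (hT : T.IsTree)
    (X : ι → Set V)
    (hcover : ∀ v : V, ∃ i, v ∈ X i)
    (hedge : ∀ u v : V, A u v → ∃ i, u ∈ X i ∧ v ∈ X i)
    (hconn : ∀ v : V, (T.induce {i | v ∈ X i}).Connected) :
    ∀ v : V, (T.induce {i | v ∈ X i ∪ {u | ∃ x ∈ X i, A u x}}).Connected :=
  induced_subtree_of_bags_with_inneighbors_general A T X hedge hconn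
end

section
/- Consider the vertex set V = ZMod 5 × Bool with the symmetric weight function w defined by: w((i,b),(i+1,b)) = w((i+1,b),(i,b)) = 1 for every i : ZMod 5 and b : Bool (the two 5-cycles); w((i,false),(i,true)) = w((i,true),(i,false)) = 1/2 for every i : ZMod 5 (the spokes); and all other weights 0. Then (V, w) admits a valid weighted improper 3-coloring but no valid weighted improper 2-coloring; in particular its weighted improper chromatic number equals 3. -/
open Finset

/-!
The 3-coloring colors both pentagons by the same proper 3-coloring of the 5-cycle, so the only
monochromatic edges are the spokes, of weight `1/2`. A 2-coloring, on the other hand, cannot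
properly color the odd outer pentagon, which leaves a monochromatic edge of weight `1`.
-/

section ValidWIC

variable {V : Type*} [Fintype V] [DecidableEq V] {k : ℕ} {w : V → V → ℝ} {c : V → Fin k}

theorem ValidWIC.weight_lt_one (hc : ValidWIC w c) (hw : ∀ u v, 0 ≤ w u v) {u v : V}
    (huv : u ≠ v) (hcol : c u = c v) : w u v < 1 :=
  (single_le_sum (f := fun u => w u v) (fun u _ => hw u v) (by simp [huv, hcol])).trans_lt
    (hc v)

theorem validWIC_of_single_monochromatic_arc
    (h : ∀ v, ∃ u₀, w u₀ v < 1 ∧ ∀ u, u ≠ v → c u = c v → u ≠ u₀ → w u v = 0) :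
    ValidWIC w c := by
  intro v
  obtain ⟨u₀, hu₀, hzero⟩ := h v
  have hoff : ∀ u ∈ univ.filter (fun u => u ≠ v ∧ c u = c v), u ≠ u₀ → w u v = 0 := by
    intro u hu hne
    simp only [mem_filter, mem_univ, true_and] at hu
    exact hzero u hu.1 hu.2 hne
  by_cases hmem : u₀ ∈ univ.filter (fun u => u ≠ v ∧ c u = c v)
  · rwa [sum_eq_single_of_mem u₀ hmem hoff]
  · rw [sum_eq_zero fun u hu => hoff u hu (ne_of_mem_of_not_mem hu hmem)]
    exact one_pos

end ValidWIC

theorem ZMod.exists_apply_add_one_eq_of_odd {n : ℕ} (hn : Odd n) (c : ZMod n → Fin 2) :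
    ∃ i, c (i + 1) = c i := by
  by_contra! h
  have step (i : ZMod n) : c (i + 1) = c 0 ↔ c i ≠ c 0 := by
    have := h i
    generalize c (i + 1) = a at this ⊢
    generalize c i = b at this ⊢
    generalize c 0 = x
    revert a b x; decide
  have parity (m : ℕ) : c m = c 0 ↔ Even m := by
    induction m with
    | zero => simp
    | succ m ih => rw [Nat.cast_succ, step, ne_eq, ih, Nat.even_add_one]
  exact Nat.not_even_iff_odd.mpr hn ((parity n).mp (by rw [ZMod.natCast_self]))

section PentagonalPrism

variable {w : ZMod 5 × Bool → ZMod 5 × Bool → ℝ}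

theorem prism_weight_nonneg
    (hcycle : ∀ (i : ZMod 5) (b : Bool), w (i, b) (i + 1, b) = 1 ∧ w (i + 1, b) (i, b) = 1)
    (hspoke : ∀ i : ZMod 5, w (i, false) (i, true) = 1 / 2 ∧ w (i, true) (i, false) = 1 / 2)
    (hzero : ∀ p q : ZMod 5 × Bool, ¬(p.2 = q.2 ∧ (q.1 = p.1 + 1 ∨ p.1 = q.1 + 1)) →
      ¬(p.1 = q.1 ∧ p.2 ≠ q.2) → w p q = 0)
    (p q : ZMod 5 × Bool) : 0 ≤ w p q := by
  obtain ⟨i, b⟩ := p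
  obtain ⟨j, b'⟩ := q
  by_cases hcyc : b = b' ∧ (j = i + 1 ∨ i = j + 1)
  · obtain ⟨rfl, rfl | rfl⟩ := hcyc
    · rw [(hcycle i b).1]; exact zero_le_one
    · rw [(hcycle j b).2]; exact zero_le_one
  by_cases hsp : i = j ∧ b ≠ b'
  · obtain ⟨rfl, hb⟩ := hsp
    cases b <;> cases b' <;> simp_all
  · rw [hzero _ _ hcyc hsp]

def pentagonColoring : ZMod 5 → Fin 3 := ![0, 1, 0, 1, 2]

theorem pentagonColoring_add_one_ne (i : ZMod 5) :
    pentagonColoring (i + 1) ≠ pentagonColoring i := by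
  revert i; decide

theorem validWIC_pentagonColoring_fst
    (hspoke : ∀ i : ZMod 5, w (i, false) (i, true) = 1 / 2 ∧ w (i, true) (i, false) = 1 / 2)
    (hzero : ∀ p q : ZMod 5 × Bool, ¬(p.2 = q.2 ∧ (q.1 = p.1 + 1 ∨ p.1 = q.1 + 1)) →
      ¬(p.1 = q.1 ∧ p.2 ≠ q.2) → w p q = 0) :
    ValidWIC w (fun p => pentagonColoring p.1) := by
  refine validWIC_of_single_monochromatic_arc fun ⟨i, b⟩ => ⟨(i, !b), ?_, ?_⟩
  · cases b <;> norm_num [hspoke]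
  · rintro ⟨j, b'⟩ - hcol hne
    refine hzero _ _ ?_ ?_
    · rintro ⟨-, h | h⟩ <;> subst h
      · exact pentagonColoring_add_one_ne j hcol.symm
      · exact pentagonColoring_add_one_ne i hcol
    · rintro ⟨rfl, hb⟩
      cases b <;> cases b' <;> simp_all

end PentagonalPrism

theorem pentagonal_prism_chromatic_three
    (w : ZMod 5 × Bool → ZMod 5 × Bool → ℝ)
    (hcycle : ∀ (i : ZMod 5) (b : Bool),
      w (i, b) (i + 1, b) = 1 ∧ w (i + 1, b) (i, b) = 1)
    (hspoke : ∀ i : ZMod 5,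
      w (i, false) (i, true) = 1 / 2 ∧ w (i, true) (i, false) = 1 / 2)
    (hzero : ∀ p q : ZMod 5 × Bool,
      ¬(p.2 = q.2 ∧ (q.1 = p.1 + 1 ∨ p.1 = q.1 + 1)) →
      ¬(p.1 = q.1 ∧ p.2 ≠ q.2) → w p q = 0) :
    (∃ c : ZMod 5 × Bool → Fin 3, ValidWIC w c) ∧
      ¬(∃ c : ZMod 5 × Bool → Fin 2, ValidWIC w c) := by
  refine ⟨⟨_, validWIC_pentagonColoring_fst hspoke hzero⟩, ?_⟩
  rintro ⟨c, hc⟩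
  obtain ⟨i, hi⟩ := ZMod.exists_apply_add_one_eq_of_odd (by decide) fun i => c (i, false)
  have hne : ((i, false) : ZMod 5 × Bool) ≠ (i + 1, false) := by
    simp [show (1 : ZMod 5) ≠ 0 by decide]
  exact (hc.weight_lt_one (prism_weight_nonneg hcycle hspoke hzero) hne hi.symm).ne
    (hcycle i false).1
end
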